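/- Define for a ∈ ℂ the 4-qubit state |ψ⁽⁹⁾(a)⟩ = a(|0000⟩+|0101⟩+|1010⟩+|1111⟩) − 2i(|0100⟩−|1001⟩−|1110⟩). Then (I₂ ⊗ (iσ_z) ⊗ I₂ ⊗ (iσ_z))|ψ⁽⁹⁾(a)⟩ = |ψ⁽⁹⁾(−a)⟩, where σ_z = [[1,0],[0,−1]]. -/

import Mathlib

noncomputable section

open Complex

/-- The 4-qubit state space `(ℂ²)^⊗4`, realized as functions on the computational basis. -/
abbrev Q4 := Fin 2 × Fin 2 × Fin 2 × Fin 2 → ℂ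

/-- The computational basis state `|ijkl⟩`. -/
def ket (i j k l : Fin 2) : Q4 := Pi.single (i, j, k, l) 1

/-- The factor-wise action `A ⊗ B ⊗ C ⊗ D` of four one-qubit operators on `(ℂ²)^⊗4`. -/
def tens4 (A B C D : Matrix (Fin 2) (Fin 2) ℂ) (ψ : Q4) : Q4 := fun x =>
  ∑ y : Fin 2 × Fin 2 × Fin 2 × Fin 2,
    A x.1 y.1 * B x.2.1 y.2.1 * C x.2.2.1 y.2.2.1 * D x.2.2.2 y.2.2.2 * ψ y

/-- The Pauli matrix `σ_z`. -/
def σz : Matrix (Fin 2) (Fin 2) ℂ := !![1, 0; 0, -1]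

/-- The family-9 state `|ψ⁽⁹⁾(a)⟩`. -/
def ψ9 (a : ℂ) : Q4 :=
  a • (ket 0 0 0 0 + ket 0 1 0 1 + ket 1 0 1 0 + ket 1 1 1 1)
  - (2 * I) • (ket 0 1 0 0 - ket 1 0 0 1 - ket 1 1 1 0)

section Tens4

variable (A B C D : Matrix (Fin 2) (Fin 2) ℂ)

theorem tens4_add (ψ φ : Q4) : tens4 A B C D (ψ + φ) = tens4 A B C D ψ + tens4 A B C D φ := by
  ext x
  simp only [tens4, Pi.add_apply, mul_add, Finset.sum_add_distrib]

theorem tens4_sub (ψ φ : Q4) : tens4 A B C D (ψ - φ) = tens4 A B C D ψ - tens4 A B C D φ := by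
  ext x
  simp only [tens4, Pi.sub_apply, mul_sub, Finset.sum_sub_distrib]

theorem tens4_smul (c : ℂ) (ψ : Q4) : tens4 A B C D (c • ψ) = c • tens4 A B C D ψ := by
  ext x
  simp only [tens4, Pi.smul_apply, smul_eq_mul, Finset.mul_sum]
  exact Finset.sum_congr rfl fun _ _ => by ring

end Tens4

theorem tens4_diagonal_ket (d₁ d₂ d₃ d₄ : Fin 2 → ℂ) (i j k l : Fin 2) :
    tens4 (Matrix.diagonal d₁) (Matrix.diagonal d₂) (Matrix.diagonal d₃) (Matrix.diagonal d₄)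
      (ket i j k l) = (d₁ i * d₂ j * d₃ k * d₄ l) • ket i j k l := by
  ext ⟨i', j', k', l'⟩
  rw [tens4, Fintype.sum_eq_single (i, j, k, l) fun y hy => by simp [ket, hy]]
  simp only [ket, Pi.smul_apply, Pi.single_apply, Prod.mk.injEq, Matrix.diagonal_apply]
  split_ifs <;> simp_all

theorem smul_σz (c : ℂ) : c • σz = Matrix.diagonal ![c, -c] := by
  ext i j
  fin_cases i <;> fin_cases j <;> simp [σz]

/-- `(I₂ ⊗ (iσ_z) ⊗ I₂ ⊗ (iσ_z))|ψ⁽⁹⁾(a)⟩ = |ψ⁽⁹⁾(−a)⟩`. -/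
theorem stmt_13 (a : ℂ) :
    tens4 1 (I • σz) 1 (I • σz) (ψ9 a) = ψ9 (-a) := by
  -- `iσ_z ⊗ iσ_z` on qubits 2 and 4 has phase `-1` when they agree and `+1` when they differ:
  -- exactly the sign pattern separating the `a`-terms from the `2i`-terms of `ψ9`.
  rw [← Matrix.diagonal_one, smul_σz]
  simp only [ψ9, tens4_add, tens4_sub, tens4_smul, tens4_diagonal_ket]
  simp
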